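/- arXiv:2403.09274 — 4 statements merged into one kernel-verified Lean document; each statement's English description precedes it below -/
import Mathlib

section
/- Let $T \geq 1$ be a natural number, and let $\gamma : \{1,\dots,T\} \to \mathbb{R}$ with $\gamma[1] = 0$, and $R^{(l)} : \{1,\dots,T\} \to \mathbb{R}$. Define $R^{(l-1)}[t] = (1-\gamma[t])\big(\sum_{i=t+1}^T R^{(l)}[i] \prod_{j=t+1}^i \gamma[j] + R^{(l)}[t]\big)$. Then for every $k < T$, $\sum_{t=1}^k R^{(l-1)}[t] = \sum_{t=1}^k R^{(l)}[t] + \sum_{i=k+1}^T R^{(l)}[i] \prod_{j=k+1}^i \gamma[j]$. -/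
open Finset

lemma sltrp_tail_step (T t : ℕ) (γ Rl : ℕ → ℝ) (ht : t ≤ T) :
    ∑ i ∈ Finset.Icc t T, Rl i * ∏ j ∈ Finset.Icc t i, γ j =
      γ t * (Rl t + ∑ i ∈ Finset.Icc (t+1) T, Rl i * ∏ j ∈ Finset.Icc (t+1) i, γ j) := by
  have h1 : Finset.Icc t T = insert t (Finset.Icc (t+1) T) := by
    rw [Finset.Icc_add_one_left_eq_Ioc, Finset.Ioc_insert_left ht]
  rw [h1, Finset.sum_insert (by simp)]
  have h2 : ∀ i ∈ Finset.Icc (t+1) T,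
      Rl i * ∏ j ∈ Finset.Icc t i, γ j = γ t * (Rl i * ∏ j ∈ Finset.Icc (t+1) i, γ j) := by
    intro i hi
    have hti : t ≤ i := le_trans (Nat.le_succ t) (Finset.mem_Icc.mp hi).1
    have : Finset.Icc t i = insert t (Finset.Icc (t+1) i) := by
      rw [Finset.Icc_add_one_left_eq_Ioc, Finset.Ioc_insert_left hti]
    rw [this, Finset.prod_insert (by simp)]
    ring
  rw [Finset.sum_congr rfl h2, ← Finset.mul_sum]
  simp [Finset.Icc_self]
  ring

theorem sltrp_prop1
    (T : ℕ) (hT : 1 ≤ T) (γ Rl Rprev : ℕ → ℝ) (hγ1 : γ 1 = 0)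
    (hR : ∀ t, 1 ≤ t → t ≤ T → Rprev t =
      (1 - γ t) * ((∑ i ∈ Finset.Icc (t+1) T, Rl i * ∏ j ∈ Finset.Icc (t+1) i, γ j) + Rl t)) :
    ∀ k, k < T →
      ∑ t ∈ Finset.Icc 1 k, Rprev t =
        (∑ t ∈ Finset.Icc 1 k, Rl t) +
          ∑ i ∈ Finset.Icc (k+1) T, Rl i * ∏ j ∈ Finset.Icc (k+1) i, γ j := by
  intro k
  induction k with
  | zero =>
    intro hk
    have := sltrp_tail_step T 1 γ Rl hT
    simp only [Finset.Icc_eq_empty_of_lt (by norm_num : (0:ℕ) < 1)] at *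
    simpa [hγ1] using this.symm
  | succ k ih =>
    intro hk
    have hk' : k < T := Nat.lt_of_succ_lt hk
    have hkT : k + 1 ≤ T := le_of_lt hk
    have hsum : ∑ t ∈ Finset.Icc 1 (k+1), Rprev t =
        (∑ t ∈ Finset.Icc 1 k, Rprev t) + Rprev (k+1) :=
      Finset.sum_Icc_succ_top (Nat.one_le_iff_ne_zero.mpr (Nat.succ_ne_zero k)) _
    have hsum' : ∑ t ∈ Finset.Icc 1 (k+1), Rl t =
        (∑ t ∈ Finset.Icc 1 k, Rl t) + Rl (k+1) :=
      Finset.sum_Icc_succ_top (Nat.one_le_iff_ne_zero.mpr (Nat.succ_ne_zero k)) _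
    have htail := sltrp_tail_step T (k+1) γ Rl hkT
    rw [hsum, ih hk', hR (k+1) (Nat.le_add_left 1 k) hkT, hsum', htail]
    ring
end

section
/- Let $T \geq 1$, $\gamma : \{1,\dots,T\} \to \mathbb{R}$ with $\gamma[1] = 0$, and $R^{(l)} : \{1,\dots,T\} \to \mathbb{R}$. With $R^{(l-1)}[t] = (1-\gamma[t])\big(\sum_{i=t+1}^T R^{(l)}[i] \prod_{j=t+1}^i \gamma[j] + R^{(l)}[t]\big)$, the total relevance is conserved: $\sum_{t=1}^T R^{(l-1)}[t] = \sum_{t=1}^T R^{(l)}[t]$. -/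
open Finset

theorem sltrp_conservation
    (T : ℕ) (hT : 1 ≤ T) (γ Rl Rprev : ℕ → ℝ) (hγ1 : γ 1 = 0)
    (hR : ∀ t, 1 ≤ t → t ≤ T → Rprev t =
      (1 - γ t) * ((∑ i ∈ Finset.Icc (t+1) T, Rl i * ∏ j ∈ Finset.Icc (t+1) i, γ j) + Rl t)) :
    ∑ t ∈ Finset.Icc 1 T, Rprev t = ∑ t ∈ Finset.Icc 1 T, Rl t := by
  set G : ℕ → ℝ := fun t => ∑ i ∈ Finset.Icc t T, Rl i * ∏ j ∈ Finset.Icc t i, γ j with hG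
  have key : ∀ t, 1 ≤ t → t ≤ T → Rprev t = Rl t + (G (t+1) - G t) := by
    intro t ht htT
    have hGt : G t = γ t * ((∑ i ∈ Finset.Icc (t+1) T, Rl i * ∏ j ∈ Finset.Icc (t+1) i, γ j) + Rl t) := by
      have hsplit : Finset.Icc t T = insert t (Finset.Icc (t+1) T) := by
        exact (Finset.insert_Icc_add_one_left_eq_Icc htT).symm
      rw [hG]
      simp only
      rw [hsplit, Finset.sum_insert (by simp)]
      have h1 : ∀ i ∈ Finset.Icc (t+1) T, Rl i * ∏ j ∈ Finset.Icc t i, γ j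
          = γ t * (Rl i * ∏ j ∈ Finset.Icc (t+1) i, γ j) := by
        intro i hi
        have hti : t ≤ i := le_trans (Nat.le_succ t) (Finset.mem_Icc.mp hi).1
        have : Finset.Icc t i = insert t (Finset.Icc (t+1) i) := by
          exact (Finset.insert_Icc_add_one_left_eq_Icc hti).symm
        rw [this, Finset.prod_insert (by simp)]
        ring
      rw [Finset.sum_congr rfl h1, ← Finset.mul_sum]
      simp [Finset.Icc_self]
      ring
    have hGt1 : G (t+1) = ∑ i ∈ Finset.Icc (t+1) T, Rl i * ∏ j ∈ Finset.Icc (t+1) i, γ j := rfl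
    rw [hR t ht htT, hGt, hGt1]
    ring
  have hsum : ∑ t ∈ Finset.Icc 1 T, Rprev t
      = ∑ t ∈ Finset.Icc 1 T, (Rl t + (G (t+1) - G t)) := by
    refine Finset.sum_congr rfl ?_
    intro t ht
    obtain ⟨h1, h2⟩ := Finset.mem_Icc.mp ht
    exact key t h1 h2
  rw [hsum, Finset.sum_add_distrib]
  have htel : ∑ t ∈ Finset.Icc 1 T, (G (t+1) - G t) = G (T+1) - G 1 := by
    rw [show Finset.Icc 1 T = Finset.Ico 1 (T+1) by rfl, Finset.sum_Ico_eq_sum_range]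
    simp only [Nat.add_sub_cancel]
    have := Finset.sum_range_sub (fun i => G (i+1)) T
    simpa [add_comm, add_left_comm, add_assoc] using this
  have hGT1 : G (T+1) = 0 := by simp [hG]
  have hG1 : G 1 = 0 := by
    rw [hG]
    apply Finset.sum_eq_zero
    intro i hi
    have h1i : 1 ≤ i := (Finset.mem_Icc.mp hi).1
    have : ∏ j ∈ Finset.Icc 1 i, γ j = 0 :=
      Finset.prod_eq_zero (Finset.mem_Icc.mpr ⟨le_refl 1, h1i⟩) hγ1
    simp [this]
  rw [htel, hGT1, hG1]
  ring
end

section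
/- Let $T \geq 2$, $\gamma : \{1,\dots,T\} \to \mathbb{R}$ with $\gamma[1] = 0$, and $R^{(l)} : \{1,\dots,T\} \to \mathbb{R}$. With $R^{(l-1)}[t]$ given by the closed form $R^{(l-1)}[t] = (1-\gamma[t])\big(\sum_{i=t+1}^T R^{(l)}[i]\prod_{j=t+1}^i \gamma[j] + R^{(l)}[t]\big)$, for every $1 \leq k \leq T-1$ the partial sums satisfy the recursive relation $\sum_{t=1}^{k} R^{(l-1)}[t] = \sum_{t=1}^{k-1} R^{(l)}[t] + \frac{R^{(l-1)}[k]}{1 - \gamma[k]}$, provided $\gamma[k] \neq 1$. -/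
open Finset

theorem sltrp_partial_sum_identity
    (T : ℕ) (hT : 2 ≤ T) (γ Rl Rprev : ℕ → ℝ) (hγ1 : γ 1 = 0)
    (hR : ∀ t, 1 ≤ t → t ≤ T → Rprev t =
      (1 - γ t) * ((∑ i ∈ Finset.Icc (t+1) T, Rl i * ∏ j ∈ Finset.Icc (t+1) i, γ j) + Rl t)) :
    ∀ k, 1 ≤ k → k ≤ T - 1 → γ k ≠ 1 →
      ∑ t ∈ Finset.Icc 1 k, Rprev t =
        (∑ t ∈ Finset.Icc 1 (k-1), Rl t) + Rprev k / (1 - γ k) := by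
  set S : ℕ → ℝ := fun t =>
    (∑ i ∈ Finset.Icc (t+1) T, Rl i * ∏ j ∈ Finset.Icc (t+1) i, γ j) + Rl t with hS
  -- recurrence for S
  have hrec : ∀ k, k + 1 ≤ T → S k = Rl k + γ (k+1) * S (k+1) := by
    intro k hk
    have hins : Finset.Icc (k+1) T = insert (k+1) (Finset.Ioc (k+1) T) :=
      (Finset.Ioc_insert_left hk).symm
    have hIcc : Finset.Ioc (k+1) T = Finset.Icc (k+2) T := by
      rw [← Finset.Icc_add_one_left_eq_Ioc]
      rfl
    simp only [hS]
    rw [hins, Finset.sum_insert (by simp), Finset.Icc_self, Finset.prod_singleton, hIcc]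
    have hprod : ∀ i ∈ Finset.Icc (k+2) T,
        Rl i * ∏ j ∈ Finset.Icc (k+1) i, γ j
          = γ (k+1) * (Rl i * ∏ j ∈ Finset.Icc (k+2) i, γ j) := by
      intro i hi
      simp only [Finset.mem_Icc] at hi
      have h2 : Finset.Icc (k+2) i = Finset.Ioc (k+1) i := Finset.Icc_add_one_left_eq_Ioc _ _
      have h3 : Finset.Icc (k+1) i = insert (k+1) (Finset.Icc (k+2) i) := by
        rw [h2, Finset.Ioc_insert_left (by omega)]
      rw [h3, Finset.prod_insert (by simp)]
      ring
    rw [Finset.sum_congr rfl hprod, ← Finset.mul_sum]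
    ring
  have key : ∀ k, 1 ≤ k → k ≤ T →
      ∑ t ∈ Finset.Icc 1 k, Rprev t = (∑ t ∈ Finset.Icc 1 (k-1), Rl t) + S k := by
    intro k hk
    induction k, hk using Nat.le_induction with
    | base =>
      intro _
      have h1T : (1:ℕ) ≤ T := by omega
      simp only [Finset.Icc_self, Finset.sum_singleton, Nat.sub_self, hR 1 le_rfl h1T, hγ1]
      norm_num
      simp [hS]
    | succ k hk ih =>
      intro hkT
      have hkT' : k ≤ T := by omega
      rw [Finset.sum_Icc_succ_top (by omega : 1 ≤ k + 1), ih hkT',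
        hR (k+1) (by omega) hkT]
      have hsum : ∑ t ∈ Finset.Icc 1 (k+1-1), Rl t
          = (∑ t ∈ Finset.Icc 1 (k-1), Rl t) + Rl k := by
        have hk' : k = (k-1) + 1 := by omega
        rw [Nat.add_sub_cancel, hk', Finset.sum_Icc_succ_top (by omega), ← hk']
      rw [hsum, hrec k hkT]
      ring
  intro k hk hkT hγk
  have hne : (1 : ℝ) - γ k ≠ 0 := sub_ne_zero_of_ne (Ne.symm hγk)
  rw [key k hk (by omega), hR k hk (by omega), mul_div_cancel_left₀ _ hne]
end

section
/- Let $T \geq 1$, and for $t \in \{1,\dots,T\}$ let $\gamma[t], R^{(l)}[t] \in \mathbb{R}$ with $\gamma[1] = 0$ and $\gamma[t] \neq 1$ for all $t$. If $R^{(l)}[t] = 0$ for all $t < T$ (relevance concentrated at the final time step), then the closed form $R^{(l-1)}[t] = (1-\gamma[t])\big(\sum_{i=t+1}^T R^{(l)}[i]\prod_{j=t+1}^i \gamma[j] + R^{(l)}[t]\big)$ reduces to $R^{(l-1)}[t] = (1-\gamma[t]) R^{(l)}[T] \prod_{j=t+1}^T \gamma[j]$ for $t < T$ and $R^{(l-1)}[T]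 = (1-\gamma[T]) R^{(l)}[T]$, and moreover $\sum_{t=1}^T R^{(l-1)}[t] = R^{(l)}[T]$. -/
open Finset

theorem sltrp_final_step_concentration
    (T : ℕ) (hT : 1 ≤ T) (γ Rl Rprev : ℕ → ℝ)
    (hγ1 : γ 1 = 0) (hγ : ∀ t, 1 ≤ t → t ≤ T → γ t ≠ 1)
    (hRl : ∀ t, 1 ≤ t → t < T → Rl t = 0)
    (hR : ∀ t, 1 ≤ t → t ≤ T → Rprev t =
      (1 - γ t) * ((∑ i ∈ Finset.Icc (t+1) T, Rl i * ∏ j ∈ Finset.Icc (t+1) i, γ j) + Rl t)) :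
    (∀ t, 1 ≤ t → t < T →
        Rprev t = (1 - γ t) * Rl T * ∏ j ∈ Finset.Icc (t+1) T, γ j) ∧
    Rprev T = (1 - γ T) * Rl T ∧
    ∑ t ∈ Finset.Icc 1 T, Rprev t = Rl T := by
  have partA : ∀ t, 1 ≤ t → t < T →
      Rprev t = (1 - γ t) * Rl T * ∏ j ∈ Finset.Icc (t+1) T, γ j := by
    intro t h1 h2
    rw [hR t h1 (le_of_lt h2), hRl t h1 h2]
    have hsum : (∑ i ∈ Finset.Icc (t+1) T, Rl i * ∏ j ∈ Finset.Icc (t+1) i, γ j)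
        = Rl T * ∏ j ∈ Finset.Icc (t+1) T, γ j := by
      rw [Finset.sum_eq_single_of_mem T (by simp [Finset.mem_Icc]; omega)]
      intro i hi hne
      simp only [Finset.mem_Icc] at hi
      rw [hRl i (by omega) (by omega)]
      ring
    rw [hsum]; ring
  have partB : Rprev T = (1 - γ T) * Rl T := by
    rw [hR T hT le_rfl, Finset.Icc_eq_empty (by omega)]
    simp
  refine ⟨partA, partB, ?_⟩
  set P : ℕ → ℝ := fun t => ∏ j ∈ Finset.Icc t T, γ j with hP
  have hP1 : P 1 = 0 := by
    exact Finset.prod_eq_zero (Finset.mem_Icc.mpr ⟨le_rfl, hT⟩) hγ1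
  have hPT1 : P (T+1) = 1 := by
    simp [hP, Finset.Icc_eq_empty (by omega : ¬ T + 1 ≤ T)]
  have hstep : ∀ t, 1 ≤ t → t ≤ T → Rprev t = Rl T * (P (t+1) - P t) := by
    intro t h1 h2
    have hins : Finset.Icc t T = insert t (Finset.Icc (t+1) T) := by
      ext x; simp [Finset.mem_Icc]; omega
    have hnm : t ∉ Finset.Icc (t+1) T := by simp [Finset.mem_Icc]
    have hPt : P t = γ t * P (t+1) := by
      simp [hP, hins, Finset.prod_insert hnm]
    rcases eq_or_lt_of_le h2 with rfl | hlt
    · rw [partB, hPt, hPT1]; ring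
    · rw [partA t h1 hlt, hPt]
      simp only [hP]
      ring
  have : ∑ t ∈ Finset.Icc 1 T, Rprev t = ∑ t ∈ Finset.Icc 1 T, Rl T * (P (t+1) - P t) := by
    apply Finset.sum_congr rfl
    intro t ht
    simp only [Finset.mem_Icc] at ht
    exact hstep t ht.1 ht.2
  rw [this, ← Finset.mul_sum]
  have htel : ∑ t ∈ Finset.Icc 1 T, (P (t+1) - P t) = P (T+1) - P 1 := by
    rw [show Finset.Icc 1 T = Finset.Ico 1 (T+1) by rfl, Finset.sum_Ico_eq_sum_range]
    have := Finset.sum_range_sub (fun i => P (i+1)) T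
    simpa [add_comm, add_left_comm, add_assoc] using this
  rw [htel, hP1, hPT1]
  ring
end
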